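/- arXiv:math/0601485 — 3 statements merged into one kernel-verified Lean document; each statement's English description precedes it below -/
import Mathlib

section
/- If a holomorphic filtration 𝒻 on an n-dimensional polarized projective manifold (M, L) is τ-Mumford stable (with τᵢ ≥ 0), then it is Gieseker R-stable for the polynomials Rᵢ(k) = τᵢ k^{n-1} + O(k^{n-2}): that is, for all k large and every proper subfiltration 𝒻′, (χ(F′⊗L^k) + ∑ᵢ rk(F′ᵢ)Rᵢ(k))/rk F′ < (χ(F⊗L^k) + ∑ᵢ rk(Fᵢ)Rᵢ(k))/rk F. -/
open scoped BigOperators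

/-- Auxiliary estimate: the reduced R-Hilbert function equals
`a k^n + e k^{n-1} + μ_τ k^{n-1}` up to `O(k^{n-2})`. -/
lemma stmt14_aux {J : Type*} [Fintype J] (n : ℕ) (a e : ℝ)
    (Rkx : ℝ) (hRkx : 0 < Rkx) (rkx : J → ℝ) (dx : ℝ) (χx : ℕ → ℝ)
    (τ : J → ℝ) (Rpoly : J → ℕ → ℝ) (CR : J → ℝ)
    (hRpoly : ∀ j, ∀ k : ℕ, 1 ≤ k →
      |Rpoly j k - τ j * (k : ℝ) ^ ((n : ℝ) - 1)| ≤ CR j * (k : ℝ) ^ ((n : ℝ) - 2))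
    (Cx : ℝ) (hχx : ∀ k : ℕ, 1 ≤ k →
      |χx k - (Rkx * a * (k : ℝ) ^ (n : ℝ) + (Rkx * e + dx) * (k : ℝ) ^ ((n : ℝ) - 1))|
        ≤ Cx * (k : ℝ) ^ ((n : ℝ) - 2))
    (k : ℕ) (hk : 1 ≤ k) :
    |(χx k + ∑ j, rkx j * Rpoly j k) / Rkx
      - (a * (k : ℝ) ^ (n : ℝ) + e * (k : ℝ) ^ ((n : ℝ) - 1)
        + ((dx + ∑ j, τ j * rkx j) / Rkx) * (k : ℝ) ^ ((n : ℝ) - 1))|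
      ≤ ((Cx + ∑ j, |rkx j| * CR j) / Rkx) * (k : ℝ) ^ ((n : ℝ) - 2) := by
  have hRne : Rkx ≠ 0 := ne_of_gt hRkx
  have hrw : (χx k + ∑ j, rkx j * Rpoly j k) / Rkx
      - (a * (k : ℝ) ^ (n : ℝ) + e * (k : ℝ) ^ ((n : ℝ) - 1)
        + ((dx + ∑ j, τ j * rkx j) / Rkx) * (k : ℝ) ^ ((n : ℝ) - 1))
      = (χx k + ∑ j, rkx j * Rpoly j k
          - (Rkx * a * (k : ℝ) ^ (n : ℝ) + (Rkx * e + dx) * (k : ℝ) ^ ((n : ℝ) - 1)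
            + (∑ j, τ j * rkx j) * (k : ℝ) ^ ((n : ℝ) - 1))) / Rkx := by
    field_simp
    ring
  rw [hrw, abs_div, abs_of_pos hRkx, div_mul_eq_mul_div,
    div_le_div_iff_of_pos_right hRkx]
  have hsumrw : (∑ j, τ j * rkx j) * (k : ℝ) ^ ((n : ℝ) - 1)
      = ∑ j, rkx j * (τ j * (k : ℝ) ^ ((n : ℝ) - 1)) := by
    rw [Finset.sum_mul]
    exact Finset.sum_congr rfl fun j _ => by ring
  have hN : χx k + ∑ j, rkx j * Rpoly j k
      - (Rkx * a * (k : ℝ) ^ (n : ℝ) + (Rkx * e + dx) * (k : ℝ) ^ ((n : ℝ) - 1)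
        + (∑ j, τ j * rkx j) * (k : ℝ) ^ ((n : ℝ) - 1))
      = (χx k - (Rkx * a * (k : ℝ) ^ (n : ℝ) + (Rkx * e + dx) * (k : ℝ) ^ ((n : ℝ) - 1)))
        + ∑ j, (rkx j * Rpoly j k - rkx j * (τ j * (k : ℝ) ^ ((n : ℝ) - 1))) := by
    rw [Finset.sum_sub_distrib, hsumrw]
    ring
  rw [hN]
  have hsum : |∑ j, (rkx j * Rpoly j k - rkx j * (τ j * (k : ℝ) ^ ((n : ℝ) - 1)))|
      ≤ (∑ j, |rkx j| * CR j) * (k : ℝ) ^ ((n : ℝ) - 2) := by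
    calc |∑ j, (rkx j * Rpoly j k - rkx j * (τ j * (k : ℝ) ^ ((n : ℝ) - 1)))|
        ≤ ∑ j, |rkx j * Rpoly j k - rkx j * (τ j * (k : ℝ) ^ ((n : ℝ) - 1))| :=
          Finset.abs_sum_le_sum_abs _ _
      _ ≤ ∑ j, |rkx j| * CR j * (k : ℝ) ^ ((n : ℝ) - 2) := by
          apply Finset.sum_le_sum
          intro j _
          rw [← mul_sub, abs_mul, mul_assoc]
          exact mul_le_mul_of_nonneg_left (hRpoly j k hk) (abs_nonneg _)
      _ = (∑ j, |rkx j| * CR j) * (k : ℝ) ^ ((n : ℝ) - 2) := by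
          rw [Finset.sum_mul]
  calc |(χx k - (Rkx * a * (k : ℝ) ^ (n : ℝ) + (Rkx * e + dx) * (k : ℝ) ^ ((n : ℝ) - 1)))
        + ∑ j, (rkx j * Rpoly j k - rkx j * (τ j * (k : ℝ) ^ ((n : ℝ) - 1)))|
      ≤ |χx k - (Rkx * a * (k : ℝ) ^ (n : ℝ) + (Rkx * e + dx) * (k : ℝ) ^ ((n : ℝ) - 1))|
        + |∑ j, (rkx j * Rpoly j k - rkx j * (τ j * (k : ℝ) ^ ((n : ℝ) - 1)))| :=
        abs_add_le _ _
    _ ≤ Cx * (k : ℝ) ^ ((n : ℝ) - 2) + (∑ j, |rkx j| * CR j) * (k : ℝ) ^ ((n : ℝ) - 2) :=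
        add_le_add (hχx k hk) hsum
    _ = (Cx + ∑ j, |rkx j| * CR j) * (k : ℝ) ^ ((n : ℝ) - 2) := by ring

/-- τ-Mumford stability implies Gieseker `R`-stability for
`Rᵢ(k) = τᵢ k^{n-1} + O(k^{n-2})`.  The filtrations are encoded by their
numerical invariants: ranks `Rk`, ranks of the pieces `rk j`, degrees `d`,
and Hilbert functions `χ` satisfying the Riemann–Roch expansion
`χ(F ⊗ L^k) = rk(F)·a·k^n + (rk(F)·e + deg F)·k^{n-1} + O(k^{n-2})`
(with `a = ∫ c₁(L)ⁿ/n!` and `e = ∫ c₁(M)c₁(L)^{n-1}/2(n-1)!`), and similarly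
for every proper subfiltration `s : ι`. -/
theorem stmt14 {ι J : Type*} [Fintype J] (n : ℕ) (a e : ℝ)
    -- invariants of the full filtration 𝒻
    (Rk : ℝ) (hRk : 0 < Rk) (rk : J → ℝ) (d : ℝ) (χ : ℕ → ℝ)
    -- invariants of the proper subfiltrations 𝒻′, indexed by `ι`
    (Rk' : ι → ℝ) (hRk' : ∀ s, 0 < Rk' s) (rk' : ι → J → ℝ) (d' : ι → ℝ)
    (χ' : ι → ℕ → ℝ)
    -- the parameters τᵢ ≥ 0 and the polynomials Rᵢ(k) = τᵢ k^{n-1} + O(k^{n-2})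
    (τ : J → ℝ) (hτ : ∀ j, 0 ≤ τ j) (Rpoly : J → ℕ → ℝ)
    (CR : J → ℝ) (hRpoly : ∀ j, ∀ k : ℕ, 1 ≤ k →
      |Rpoly j k - τ j * (k : ℝ) ^ ((n : ℝ) - 1)| ≤ CR j * (k : ℝ) ^ ((n : ℝ) - 2))
    -- Riemann–Roch expansions of the Hilbert functions
    (C : ℝ) (hχ : ∀ k : ℕ, 1 ≤ k →
      |χ k - (Rk * a * (k : ℝ) ^ (n : ℝ) + (Rk * e + d) * (k : ℝ) ^ ((n : ℝ) - 1))|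
        ≤ C * (k : ℝ) ^ ((n : ℝ) - 2))
    (C' : ι → ℝ) (hχ' : ∀ s, ∀ k : ℕ, 1 ≤ k →
      |χ' s k - (Rk' s * a * (k : ℝ) ^ (n : ℝ)
          + (Rk' s * e + d' s) * (k : ℝ) ^ ((n : ℝ) - 1))|
        ≤ C' s * (k : ℝ) ^ ((n : ℝ) - 2))
    -- τ-Mumford stability: μ_τ(𝒻′) < μ_τ(𝒻) for every proper subfiltration
    (hstab : ∀ s, (d' s + ∑ j, τ j * rk' s j) / Rk' s < (d + ∑ j, τ j * rk j) / Rk) :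
    -- Gieseker R-stability
    ∀ s, ∃ K : ℕ, ∀ k ≥ K,
      (χ' s k + ∑ j, rk' s j * Rpoly j k) / Rk' s
        < (χ k + ∑ j, rk j * Rpoly j k) / Rk := by
  intro s
  set μ := (d + ∑ j, τ j * rk j) / Rk with hμdef
  set μ' := (d' s + ∑ j, τ j * rk' s j) / Rk' s with hμ'def
  have hδ : 0 < μ - μ' := sub_pos.2 (hstab s)
  set D1 := (C + ∑ j, |rk j| * CR j) / Rk with hD1def
  set D2 := (C' s + ∑ j, |rk' s j| * CR j) / Rk' s with hD2def
  refine ⟨max 1 (⌈(D1 + D2) / (μ - μ')⌉₊ + 1), fun k hk => ?_⟩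
  have hk1 : 1 ≤ k := le_trans (le_max_left _ _) hk
  have hk1' : (1 : ℝ) ≤ (k : ℝ) := by exact_mod_cast hk1
  have hkpos : (0 : ℝ) < (k : ℝ) := by linarith
  have hkD : D1 + D2 < (μ - μ') * (k : ℝ) := by
    have h1 : (D1 + D2) / (μ - μ') ≤ (⌈(D1 + D2) / (μ - μ')⌉₊ : ℝ) := Nat.le_ceil _
    have h2 : (⌈(D1 + D2) / (μ - μ')⌉₊ : ℝ) < (k : ℝ) := by
      have : ⌈(D1 + D2) / (μ - μ')⌉₊ + 1 ≤ k := le_trans (le_max_right _ _) hk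
      exact_mod_cast this
    have := lt_of_le_of_lt h1 h2
    calc D1 + D2 = (D1 + D2) / (μ - μ') * (μ - μ') := by field_simp
      _ < (k : ℝ) * (μ - μ') := by
          exact mul_lt_mul_of_pos_right this hδ
      _ = (μ - μ') * (k : ℝ) := by ring
  have h1 := stmt14_aux n a e Rk hRk rk d χ τ Rpoly CR hRpoly C hχ k hk1
  have h2 := stmt14_aux n a e (Rk' s) (hRk' s) (rk' s) (d' s) (χ' s) τ Rpoly CR hRpoly
    (C' s) (hχ' s) k hk1
  rw [← hμdef, ← hD1def] at h1
  rw [← hμ'def, ← hD2def] at h2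
  have hb1 := abs_le.1 h1
  have hb2 := abs_le.1 h2
  have kn2pos : (0 : ℝ) < (k : ℝ) ^ ((n : ℝ) - 2) := Real.rpow_pos_of_pos hkpos _
  have keq : (k : ℝ) ^ ((n : ℝ) - 1) = (k : ℝ) ^ ((n : ℝ) - 2) * (k : ℝ) := by
    rw [show (n : ℝ) - 1 = ((n : ℝ) - 2) + 1 by ring, Real.rpow_add hkpos, Real.rpow_one]
  have hkey : (D1 + D2) * (k : ℝ) ^ ((n : ℝ) - 2)
      < (μ - μ') * (k : ℝ) ^ ((n : ℝ) - 1) := by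
    rw [keq]
    nlinarith [kn2pos, hkD]
  obtain ⟨h1l, h1r⟩ := hb1
  obtain ⟨h2l, h2r⟩ := hb2
  linarith
end

section
/- With the metric h' = h·(Id + η) (η a small h-hermitian endomorphism), the weighted sum of orthogonal projections onto the subbundles of a holomorphic filtration expands to first order as ∑ᵢ τᵢ π^𝒻_{h',i} = ∑ᵢ τᵢ π^𝒻_{h,i} + Π^{𝒻,τ}_h(η) + O(η²), where Π^{𝒻,τ}_h(η) = ∑ᵢ τᵢ π^𝒻_{h,i} η (Id − π^𝒻_{h,i}). -/
open scoped InnerProductSpace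

/-!
Let `p` and `π` be the `h`- and `h(1 + η)`-orthogonal projections onto the same subspace, and
`A = π - p`. As idempotents with the same range, they satisfy `pπ = π` and `πp = p`.
Compressing the self-adjointness relation `(1 + η)π = π⋆(1 + η)` between `p` on the left and
`1 - p` on the right gives `A + pηA = pη(1 - p)`. Hence `‖A‖ = O(‖η‖)`, and then
`π - p - pη(1 - p) = -pηA = O(‖η‖²)`; the weighted sum is handled term by term.
-/

section StarRing

variable {R : Type*} [Ring R] [StarRing R] {p π η : R}

theorem sub_add_mul_mul_sub_eq_of_isSelfAdjoint_one_add_mul (hp : IsSelfAdjoint p)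
    (hpπ : p * π = π) (hπp : π * p = p) (hη : IsSelfAdjoint η)
    (hπη : IsSelfAdjoint ((1 + η) * π)) :
    (π - p) + p * η * (π - p) = p * η * (1 - p) := by
  have hpp : p * p = p := by
    calc p * p = p * π * p := by rw [mul_assoc, hπp]
      _ = p := by rw [hpπ, hπp]
  have hpA : p * (π - p) = π - p := by rw [mul_sub, hpπ, hpp]
  have hpπ_star : p * star π = p := by rw [← hp.star_eq, ← star_mul, hπp]
  have hπη' : (1 + η) * π = star π * (1 + η) := by
    conv_lhs => rw [← hπη.star_eq]
    rw [star_mul, star_add, star_one, hη.star_eq]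
  calc (π - p) + p * η * (π - p) = (p + p * η) * (π * (1 - p)) := by
        rw [mul_sub π, mul_one, hπp, add_mul, hpA]
    _ = p * ((1 + η) * π) * (1 - p) := by noncomm_ring
    _ = p * η * (1 - p) := by
        rw [hπη', ← mul_assoc, hpπ_star]
        simp only [mul_add, add_mul, mul_sub, mul_one, hpp]
        noncomm_ring

end StarRing

section CStarRing

variable {R : Type*} [NormedRing R] [StarRing R] [CStarRing R] {p π η : R}

theorem norm_sub_le_of_isSelfAdjoint_one_add_mul (hp : IsStarProjection p)
    (hpπ : p * π = π) (hπp : π * p = p) (hη : IsSelfAdjoint η) (hη_le : ‖η‖ ≤ 1 / 2)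
    (hπη : IsSelfAdjoint ((1 + η) * π)) :
    ‖π - p‖ ≤ 2 * ‖η‖ := by
  have key := sub_add_mul_mul_sub_eq_of_isSelfAdjoint_one_add_mul hp.isSelfAdjoint hpπ hπp hη hπη
  have hbound : ∀ x, ‖p * η * x‖ ≤ ‖η‖ * ‖x‖ := fun x =>
    calc ‖p * η * x‖ ≤ ‖p‖ * ‖η‖ * ‖x‖ := norm_mul₃_le
      _ ≤ 1 * ‖η‖ * ‖x‖ := by gcongr; exact hp.norm_le
      _ = ‖η‖ * ‖x‖ := by rw [one_mul]
  have h : ‖π - p‖ ≤ ‖η‖ + ‖η‖ * ‖π - p‖ :=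
    calc ‖π - p‖ = ‖p * η * (1 - p) - p * η * (π - p)‖ := by rw [← key, add_sub_cancel_right]
      _ ≤ ‖η‖ * ‖1 - p‖ + ‖η‖ * ‖π - p‖ := (norm_sub_le _ _).trans (add_le_add (hbound _) (hbound _))
      _ ≤ ‖η‖ * 1 + ‖η‖ * ‖π - p‖ := by gcongr; exact hp.one_sub.norm_le
      _ = ‖η‖ + ‖η‖ * ‖π - p‖ := by rw [mul_one]
  nlinarith [norm_nonneg (π - p)]

theorem norm_sub_sub_mul_mul_sub_le_of_isSelfAdjoint_one_add_mul (hp : IsStarProjection p)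
    (hpπ : p * π = π) (hπp : π * p = p) (hη : IsSelfAdjoint η) (hη_le : ‖η‖ ≤ 1 / 2)
    (hπη : IsSelfAdjoint ((1 + η) * π)) :
    ‖π - p - p * η * (1 - p)‖ ≤ 2 * ‖η‖ ^ 2 := by
  have key := sub_add_mul_mul_sub_eq_of_isSelfAdjoint_one_add_mul hp.isSelfAdjoint hpπ hπp hη hπη
  have hA := norm_sub_le_of_isSelfAdjoint_one_add_mul hp hpπ hπp hη hη_le hπη
  calc ‖π - p - p * η * (1 - p)‖ = ‖p * η * (π - p)‖ := by
        rw [← key, sub_add_cancel_left, norm_neg]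
    _ ≤ ‖p‖ * ‖η‖ * ‖π - p‖ := norm_mul₃_le
    _ ≤ 1 * ‖η‖ * (2 * ‖η‖) := by gcongr; exact hp.norm_le
    _ = 2 * ‖η‖ ^ 2 := by ring

end CStarRing

theorem ContinuousLinearMap.mul_eq_right_of_range_le {R M : Type*} [Ring R] [TopologicalSpace M]
    [AddCommGroup M] [Module R M] {p q : M →L[R] M} (hp : IsIdempotentElem p)
    (h : LinearMap.range (q : M →ₗ[R] M) ≤ LinearMap.range (p : M →ₗ[R] M)) : p * q = q := by
  have hp' := ContinuousLinearMap.IsIdempotentElem.toLinearMap hp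
  exact ContinuousLinearMap.coe_injective
    ((LinearMap.IsIdempotentElem.comp_eq_right_iff hp' _).2 h)

theorem ContinuousLinearMap.isSelfAdjoint_mul_of_inner_eq {𝕜 H : Type*} [RCLike 𝕜]
    [NormedAddCommGroup H] [InnerProductSpace 𝕜 H] [CompleteSpace H] {A π : H →L[𝕜] H}
    (hA : IsSelfAdjoint A) (hπ : ∀ x y, ⟪A (π x), y⟫_𝕜 = ⟪A x, π y⟫_𝕜) :
    IsSelfAdjoint (A * π) :=
  isSelfAdjoint_iff_isSymmetric.2 fun x y => by
    change ⟪A (π x), y⟫_𝕜 = ⟪x, A (π y)⟫_𝕜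
    rw [hπ]
    exact isSelfAdjoint_iff_isSymmetric.1 hA _ _

theorem Submodule.norm_sub_starProjection_sub_le {𝕜 H : Type*} [RCLike 𝕜]
    [NormedAddCommGroup H] [InnerProductSpace 𝕜 H] [CompleteSpace H]
    (W : Submodule 𝕜 H) [W.HasOrthogonalProjection] {π η : H →L[𝕜] H}
    (hπ : IsIdempotentElem π) (hrange : LinearMap.range (π : H →ₗ[𝕜] H) = W)
    (hη : IsSelfAdjoint η) (hη_le : ‖η‖ ≤ 1 / 2) (hπη : IsSelfAdjoint ((1 + η) * π)) :
    ‖π - W.starProjection - W.starProjection * η * (1 - W.starProjection)‖ ≤ 2 * ‖η‖ ^ 2 := by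
  have hrange_p : LinearMap.range (W.starProjection : H →ₗ[𝕜] H) = W := W.range_starProjection
  refine norm_sub_sub_mul_mul_sub_le_of_isSelfAdjoint_one_add_mul isStarProjection_starProjection
    ?_ ?_ hη hη_le hπη
  · exact ContinuousLinearMap.mul_eq_right_of_range_le W.isIdempotentElem_starProjection
      (by rw [hrange, hrange_p])
  · exact ContinuousLinearMap.mul_eq_right_of_range_le hπ (by rw [hrange, hrange_p])

theorem norm_sum_ofReal_smul_le {ι E : Type*} [SeminormedAddCommGroup E] [NormedSpace ℂ E]
    (s : Finset ι) (τ : ι → ℝ) (X : ι → E) {c : ℝ} (hX : ∀ j ∈ s, ‖X j‖ ≤ c) :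
    ‖∑ j ∈ s, (τ j : ℂ) • X j‖ ≤ (∑ j ∈ s, |τ j|) * c := by
  rw [Finset.sum_mul]
  refine (norm_sum_le _ _).trans (Finset.sum_le_sum fun j hj => ?_)
  rw [norm_smul, Complex.norm_real, Real.norm_eq_abs]
  exact mul_le_mul_of_nonneg_left (hX j hj) (abs_nonneg _)

/-- First-order expansion of the weighted sum of orthogonal projections under
a perturbation `h' = h·(Id + η)` of the inner product (pointwise linear
algebra version).  Here `P j` is the `h`-orthogonal projection onto `W j`,
and any family `π' j` of idempotents with range `W j` that are self-adjoint
for the deformed inner product `⟪(Id+η)·, ·⟫` (i.e. the `h·(Id+η)`-orthogonal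
projections) satisfies
`‖∑ τⱼ π'ⱼ − ∑ τⱼ Pⱼ − ∑ τⱼ Pⱼ η (Id − Pⱼ)‖ ≤ C ‖η‖²`. -/
theorem stmt17 {H : Type*} [NormedAddCommGroup H] [InnerProductSpace ℂ H]
    [FiniteDimensional ℂ H] {m : ℕ}
    (W : Fin m → Submodule ℂ H) (τ : Fin m → ℝ)
    (P : Fin m → (H →L[ℂ] H))
    (hP : ∀ j, P j = (W j).subtypeL.comp ((W j).orthogonalProjectionOnto)) :
    ∃ ε > (0 : ℝ), ∃ C : ℝ, ∀ η : H →L[ℂ] H,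
      (∀ x y : H, ⟪η x, y⟫_ℂ = ⟪x, η y⟫_ℂ) → ‖η‖ < ε →
      ∀ π' : Fin m → (H →L[ℂ] H),
        (∀ j, π' j ∘L π' j = π' j) →
        (∀ j, LinearMap.range (π' j : H →ₗ[ℂ] H) = W j) →
        (∀ j, ∀ x y : H, ⟪(1 + η) (π' j x), y⟫_ℂ = ⟪(1 + η) x, π' j y⟫_ℂ) →
        ‖(∑ j, (τ j : ℂ) • π' j) - (∑ j, (τ j : ℂ) • P j)
            - ∑ j, (τ j : ℂ) • (P j ∘L η ∘L (1 - P j))‖ ≤ C * ‖η‖ ^ 2 := by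
  refine ⟨1 / 2, by norm_num, 2 * ∑ j, |τ j|, fun η hη_symm hη_lt π' hπ' hrange hsa => ?_⟩
  have hη : IsSelfAdjoint η := ContinuousLinearMap.isSelfAdjoint_iff_isSymmetric.2 hη_symm
  have hterm : ∀ j ∈ Finset.univ, ‖π' j - P j - P j ∘L η ∘L (1 - P j)‖ ≤ 2 * ‖η‖ ^ 2 :=
    fun j _ => by
      rw [hP j]
      exact (W j).norm_sub_starProjection_sub_le (hπ' j) (hrange j) hη hη_lt.le
        (ContinuousLinearMap.isSelfAdjoint_mul_of_inner_eq ((IsSelfAdjoint.one _).add hη) (hsa j))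
  calc _ = ‖∑ j, (τ j : ℂ) • (π' j - P j - P j ∘L η ∘L (1 - P j))‖ := by
        simp only [smul_sub, Finset.sum_sub_distrib]
    _ ≤ (∑ j, |τ j|) * (2 * ‖η‖ ^ 2) := norm_sum_ofReal_smul_le _ τ _ hterm
    _ = (2 * ∑ j, |τ j|) * ‖η‖ ^ 2 := by ring
end

section
/- Let H be a finite-dimensional complex Hilbert space, π an orthogonal projection on H (w.r.t. inner product h), η a hermitian operator, and let π_t be the orthogonal projection onto the same subspace ran(π) with respect to the deformed inner product h_t(x,y) = h((Id + tη)x, y). Then d/dt|_{t=0} π_t = π η (Id − π). -/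
open scoped InnerProductSpace

/-!
Differentiate the defining properties of `π t` at `t = 0`, with `P = π 0` and `D = π' 0`.
Every `π t` is an idempotent with range `W`, so `π s ∘ π t = π t` for all `s, t`; this gives
`D P = 0` and `P D = D`. Differentiating the `h_t`-self-adjointness of `π t` gives
`⟪D x + η P x, y⟫ = ⟪x, D y⟫ + ⟪η x, P y⟫`. At `x - P x`, which `P` and `D` kill and which is
orthogonal to `D y ∈ W`, this reads `⟪D x, y⟫ = ⟪η (x - P x), P y⟫ = ⟪P η (1 - P) x, y⟫`.
-/

section Calculus

variable {E F : Type*} [NormedAddCommGroup E] [NormedSpace ℂ E]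
  [NormedAddCommGroup F] [NormedSpace ℂ F] {t₀ : ℝ}

theorem HasDerivAt.continuousLinearMap_comp (L : E →L[ℂ] F) {f : ℝ → E} {f' : E}
    (hf : HasDerivAt f f' t₀) : HasDerivAt (fun t => L (f t)) (L f') t₀ :=
  (L.restrictScalars ℝ).hasFDerivAt.comp_hasDerivAt t₀ hf

theorem HasDerivAt.clm_apply_const {c : ℝ → E →L[ℂ] F} {c' : E →L[ℂ] F}
    (hc : HasDerivAt c c' t₀) (v : E) : HasDerivAt (fun t => c t v) (c' v) t₀ :=
  ((ContinuousLinearMap.apply ℂ F v).restrictScalars ℝ).hasFDerivAt.comp_hasDerivAt t₀ hc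

theorem HasDerivAt.one_add_smul_apply (η : E →L[ℂ] E) {f : ℝ → E} {f' : E}
    (hf : HasDerivAt f f' 0) :
    HasDerivAt (fun t : ℝ => (1 + (t : ℂ) • η) (f t)) (f' + η (f 0)) 0 := by
  have hofReal : HasDerivAt (fun t : ℝ => (t : ℂ)) 1 0 := (hasDerivAt_id (0 : ℝ)).ofReal_comp
  simpa using hf.fun_add (hofReal.fun_smul (hf.continuousLinearMap_comp η))

end Calculus

section ConstantRange

variable {E : Type*} [NormedAddCommGroup E] [NormedSpace ℂ E]

theorem ContinuousLinearMap.IsIdempotentElem.comp_eq_of_range_le {p q : E →L[ℂ] E}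
    (hp : IsIdempotentElem p)
    (hrange : LinearMap.range (q : E →ₗ[ℂ] E) ≤ LinearMap.range (p : E →ₗ[ℂ] E)) :
    p ∘L q = q := by
  ext v
  exact (LinearMap.IsIdempotentElem.mem_range_iff (IsIdempotentElem.toLinearMap hp)).mp
    (hrange (LinearMap.mem_range_self (q : E →ₗ[ℂ] E) v))

variable {π : ℝ → E →L[ℂ] E} {W : Submodule ℂ E} {D : E →L[ℂ] E} {t₀ : ℝ}

theorem comp_idempotent_eq_of_range_eq (hidem : ∀ t, IsIdempotentElem (π t))
    (hrange : ∀ t, LinearMap.range (π t : E →ₗ[ℂ] E) = W) (s t : ℝ) : π s ∘L π t = π t :=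
  ContinuousLinearMap.IsIdempotentElem.comp_eq_of_range_le (hidem s)
    (by rw [hrange s, hrange t])

theorem deriv_comp_eq_zero_of_range_eq (hidem : ∀ t, IsIdempotentElem (π t))
    (hrange : ∀ t, LinearMap.range (π t : E →ₗ[ℂ] E) = W) (hD : HasDerivAt π D t₀) :
    D ∘L π t₀ = 0 := by
  ext v
  have hconst : (fun t => π t (π t₀ v)) = fun _ => π t₀ v :=
    funext fun t => congr($(comp_idempotent_eq_of_range_eq hidem hrange t t₀) v)
  have h := hD.clm_apply_const (π t₀ v)
  rw [hconst] at h
  exact h.unique (hasDerivAt_const t₀ _)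

theorem comp_deriv_eq_self_of_range_eq (hidem : ∀ t, IsIdempotentElem (π t))
    (hrange : ∀ t, LinearMap.range (π t : E →ₗ[ℂ] E) = W) (hD : HasDerivAt π D t₀) :
    π t₀ ∘L D = D := by
  ext v
  have hfix : (fun t => π t₀ (π t v)) = fun t => π t v :=
    funext fun t => congr($(comp_idempotent_eq_of_range_eq hidem hrange t₀ t) v)
  have h := (hD.clm_apply_const v).continuousLinearMap_comp (π t₀)
  rw [hfix] at h
  exact h.unique (hD.clm_apply_const v)

end ConstantRange

section Deformation

variable {H : Type*} [NormedAddCommGroup H] [InnerProductSpace ℂ H]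

theorem inner_deriv_add_eq_of_deformed_selfAdjoint {η D : H →L[ℂ] H} {π : ℝ → H →L[ℂ] H}
    (hsa : ∀ t : ℝ, ∀ x y : H,
      ⟪(1 + ((t : ℂ) • η)) (π t x), y⟫_ℂ = ⟪(1 + ((t : ℂ) • η)) x, π t y⟫_ℂ)
    (hD : HasDerivAt π D 0) (x y : H) :
    ⟪D x + η (π 0 x), y⟫_ℂ = ⟪x, D y⟫_ℂ + ⟪η x, π 0 y⟫_ℂ := by
  have hL := ((hD.clm_apply_const x).one_add_smul_apply η).inner ℂ (hasDerivAt_const 0 y)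
  have hR := ((hasDerivAt_const 0 x).one_add_smul_apply η).inner ℂ (hD.clm_apply_const y)
  -- after rewriting by `hsa`, `hL` and `hR` are derivatives of the same function
  simp only [hsa] at hL
  simpa only [Complex.ofReal_zero, zero_smul, add_zero, one_apply_eq_self, map_zero,
      inner_zero_right, zero_add]
    using hL.unique hR

theorem eq_comp_comp_one_sub_of_inner_eq {P D η : H →L[ℂ] H}
    (hP : ∀ a b : H, ⟪P a, b⟫_ℂ = ⟪a, P b⟫_ℂ) (hidem : IsIdempotentElem P)
    (hDP : D ∘L P = 0) (hPD : P ∘L D = D)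
    (hkey : ∀ x y : H, ⟪D x + η (P x), y⟫_ℂ = ⟪x, D y⟫_ℂ + ⟪η x, P y⟫_ℂ) :
    D = P ∘L η ∘L (1 - P) := by
  ext x
  refine ext_inner_right ℂ fun y => ?_
  have hPx : P (x - P x) = 0 := by
    rw [map_sub, sub_eq_zero]
    exact congr($(hidem.eq) x).symm
  have hDx : D (x - P x) = D x := by
    rw [map_sub, ← ContinuousLinearMap.comp_apply, hDP]
    simp
  have hDy : ⟪x - P x, D y⟫_ℂ = 0 := by
    rw [← hPD, ContinuousLinearMap.comp_apply, ← hP, hPx, inner_zero_left]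
  have := hkey (x - P x) y
  rw [hPx, hDx, hDy, map_zero, add_zero, zero_add] at this
  rw [this, ← hP]
  simp [inner_sub_left]

end Deformation

theorem stmt18_general {H : Type*} [NormedAddCommGroup H] [InnerProductSpace ℂ H]
    (W : Submodule ℂ H) (P : H →L[ℂ] H)
    (η : H →L[ℂ] H)
    (π : ℝ → (H →L[ℂ] H))
    (hidem : ∀ t, π t ∘L π t = π t)
    (hrange : ∀ t, LinearMap.range (π t : H →ₗ[ℂ] H) = W)
    (hsa : ∀ t : ℝ, ∀ x y : H,
      ⟪(1 + ((t : ℂ) • η)) (π t x), y⟫_ℂ = ⟪(1 + ((t : ℂ) • η)) x, π t y⟫_ℂ)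
    (hπ0 : π 0 = P)
    (D : H →L[ℂ] H) (hderiv : HasDerivAt π D 0) :
    D = P ∘L η ∘L (1 - P) := by
  subst hπ0
  refine eq_comp_comp_one_sub_of_inner_eq ?_ (hidem 0)
    (deriv_comp_eq_zero_of_range_eq hidem hrange hderiv)
    (comp_deriv_eq_self_of_range_eq hidem hrange hderiv)
    (inner_deriv_add_eq_of_deformed_selfAdjoint hsa hderiv)
  simpa using hsa 0

/-- Derivative of a family of deformed orthogonal projections.  Let `P` be the
`h`-orthogonal projection onto a subspace `W` of a finite-dimensional complex
Hilbert space, `η` hermitian, and for each `t` let `π t` be the orthogonal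
projection onto `W` with respect to the deformed inner product
`h_t(x, y) = ⟪(Id + tη) x, y⟫` (encoded by: `π t` is idempotent with range `W`
and `h_t`-self-adjoint).  If `π` is differentiable at `0` with derivative `D`
and `π 0 = P`, then `D = P ∘ η ∘ (Id − P)`. -/
theorem stmt18 {H : Type*} [NormedAddCommGroup H] [InnerProductSpace ℂ H]
    [FiniteDimensional ℂ H]
    (W : Submodule ℂ H) (P : H →L[ℂ] H)
    (hP : P = W.subtypeL.comp (W.orthogonalProjectionOnto))
    (η : H →L[ℂ] H) (hη : ∀ x y : H, ⟪η x, y⟫_ℂ = ⟪x, η y⟫_ℂ)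
    (π : ℝ → (H →L[ℂ] H))
    (hidem : ∀ t, π t ∘L π t = π t)
    (hrange : ∀ t, LinearMap.range (π t : H →ₗ[ℂ] H) = W)
    (hsa : ∀ t : ℝ, ∀ x y : H,
      ⟪(1 + ((t : ℂ) • η)) (π t x), y⟫_ℂ = ⟪(1 + ((t : ℂ) • η)) x, π t y⟫_ℂ)
    (hπ0 : π 0 = P)
    (D : H →L[ℂ] H) (hderiv : HasDerivAt π D 0) :
    D = P ∘L η ∘L (1 - P) :=
  stmt18_general W P η π hidem hrange hsa hπ0 D hderiv
end
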